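/- arXiv:math/0212063 — 2 statements merged into one kernel-verified Lean document; each statement's English description precedes it below -/
import Mathlib

section
/- Suppose λ = μ⁺ and A ⊆ λ are such that for every ε < μ player II has a winning strategy in the cub-game 𝔊^x_ε(A, λ), and moreover if μ is regular, player II wins 𝔊^x_{μ+1}(A, λ). Then for every σ < λ, player II has a winning strategy in 𝔊^x_σ(A, λ). -/
/-!
Induction on `σ`. Write `σ = L + n` with `L` a limit and `n` finite, and let `κ = cf L ≤ μ`.
Player II wins the game of length `κ + 1` (by `h2` when `cf L = μ`, which makes `μ` regular).
Take a normal `h` with `h 0 = 0` and `h κ = L`. In the game of length `L + n` the stages `2 h η`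
and `2 h η + 1` carry a play of this master game, and the stages from `2 h η + 2` to `2 h (η + 1)`
form a block, a game of length `< L` which II wins by induction; after `L` any legal move will do.
Doubling `h` keeps parities, so II's moves in the master play and in the blocks are II's moves in
the long game. A limit stage below `L + n` is either `2 h η` for a limit `η ≤ κ`, a limit stage of
the master play, or a limit stage of a block, and normal maps preserve cofinality. The master play
is closed off at `L` by `⨆ k < L, p k`, which stays below `λ` because `|L| < cf λ = μ⁺`.
-/

open Cardinal Set

/-- restriction of a history to the moves before stage `i` (zero elsewhere). -/
noncomputable def restrictSeq (p : Ordinal → Ordinal) (i : Ordinal) : Ordinal → Ordinal :=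
  fun j => if j < i then p j else 0

/-- replace the value of `p` at `i` by `v`. -/
noncomputable def extendSeq (p : Ordinal → Ordinal) (i v : Ordinal) : Ordinal → Ordinal :=
  fun j => if j = i then v else p j

/-- a legal position of length `i` in the cub-game on `lam`. -/
def IsLegalPos (lam i : Ordinal) (p : Ordinal → Ordinal) : Prop :=
  (∀ j < i, p j < lam) ∧
  (∀ j k : Ordinal, j < k → k < i → p j < p k) ∧
  (∀ j < i, Order.IsSuccLimit j → p j = ⨆ k : Set.Iio j, p k.1)

/-- the odd stages, at which player II moves. -/
def IsOddStage (i : Ordinal) : Prop :=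
  ∃ (d : Ordinal) (n : ℕ), (d = 0 ∨ Order.IsSuccLimit d) ∧ i = d + (2 * n + 1 : ℕ)

/-- Player II has a winning strategy in the cub-game `𝔊^x_eps(A, lam)`. -/
def IIWinsCubGame (x : Set Cardinal) (eps lam : Ordinal) (A : Set Ordinal) : Prop :=
  ∃ σ : (Ordinal → Ordinal) → Ordinal,
    (∀ i < eps, IsOddStage i → ∀ p, IsLegalPos lam i p →
      IsLegalPos lam (i + 1) (extendSeq p i (σ (restrictSeq p i)))) ∧
    (∀ p, IsLegalPos lam eps p →
      (∀ i < eps, IsOddStage i → p i = σ (restrictSeq p i)) →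
      ∀ i < eps, Order.IsSuccLimit i → i.cof ∈ x → p i ∈ A)

universe u

open Order Ordinal

namespace Ordinal

theorem two_mul_of_isSuccLimit {o : Ordinal} (ho : IsSuccLimit o) : 2 * o = o :=
  mul_omega0_dvd two_pos (natCast_lt_omega0 2) (isSuccPrelimit_iff_omega0_dvd.1 ho.isSuccPrelimit)

theorem div_two_of_isSuccLimit {o : Ordinal} (ho : IsSuccLimit o) : o / 2 = o := by
  conv_lhs => rw [← two_mul_of_isSuccLimit ho]
  exact mul_div_cancel o two_ne_zero

theorem two_mul_add_mod_two (a b : Ordinal) : (2 * a + b) % 2 = b % 2 :=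
  mul_add_mod_self 2 a b

theorem two_mul_add_one_mod_two (a : Ordinal) : (2 * a + 1) % 2 = 1 := by
  rw [two_mul_add_mod_two, mod_eq_of_lt one_lt_two]

theorem two_mul_mod_two (a : Ordinal) : (2 * a) % 2 = 0 := by
  simp

theorem mod_two_of_isSuccLimit {o : Ordinal} (ho : IsSuccLimit o) : o % 2 = 0 := by
  rw [← two_mul_of_isSuccLimit ho, two_mul_mod_two]

theorem two_mul_add_one_eq (a : Ordinal.{u}) : 2 * (a + 1) = 2 * a + 1 + 1 := by
  rw [mul_add, mul_one, add_assoc, one_add_one_eq_two]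

theorem not_isSuccLimit_two_mul_add_one (a : Ordinal.{u}) : ¬ IsSuccLimit (2 * (a + 1)) := by
  rw [two_mul_add_one_eq]
  exact not_isSuccLimit_add_one _

theorem isNormal_iSup_Iio_add_one {G : Ordinal.{u} → Ordinal.{u}} (hG : StrictMono G) :
    IsNormal fun ξ => ⨆ η : Iio ξ, G η.1 + 1 := by
  have hle : ∀ ξ, ⨆ η : Iio ξ, G η.1 + 1 ≤ G ξ :=
    fun ξ => Ordinal.iSup_le fun η => add_one_le_iff.2 (hG η.2)
  have hge : ∀ {η ξ}, η < ξ → G η + 1 ≤ ⨆ η : Iio ξ, G η.1 + 1 :=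
    fun hηξ => Ordinal.le_iSup (fun η : Iio _ => G η.1 + 1) ⟨_, hηξ⟩
  refine isNormal_iff.2 ⟨fun ξ ξ' hξ => (hle ξ).trans_lt ((lt_add_one _).trans_le (hge hξ)),
    fun o ho a ha =>
      Ordinal.iSup_le fun η => (hge (lt_add_one η.1)).trans (ha _ (ho.add_one_lt η.2))⟩

theorem exists_isNormal_apply_ord_cof (L : Ordinal.{u}) :
    ∃ h : Ordinal.{u} → Ordinal.{u}, IsNormal h ∧ h 0 = 0 ∧ h L.cof.ord = L := by
  obtain ⟨g, hg⟩ := exists_isFundamentalSeq (o := L) rfl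
  let G : Ordinal.{u} → Ordinal.{u} := fun η => if hη : η < L.cof.ord then g ⟨η, hη⟩ else L + η
  have hG : StrictMono G := by
    intro η η' hηη'
    by_cases hη' : η' < L.cof.ord
    · simp only [G, dif_pos hη', dif_pos (hηη'.trans hη')]
      exact hg.strictMono hηη'
    · simp only [G, dif_neg hη']
      split_ifs with hη
      · exact (g _).2.trans_le le_self_add
      · exact add_lt_add_right hηη' L
  refine ⟨_, isNormal_iSup_Iio_add_one hG, by simp, ?_⟩
  refine (iSup_congr fun η : Iio L.cof.ord => ?_).trans hg.iSup_add_one_eq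
  simp only [G, dif_pos (mem_Iio.1 η.2)]

theorem iSup_Iio_lt_of_card_lt_cof {o a : Ordinal.{u}} {f : Ordinal.{u} → Ordinal.{u}}
    (ho : o.card < a.cof) (hf : ∀ k < o, f k < a) : ⨆ k : Iio o, f k < a := by
  refine lift_iSup_lt_of_lt_cof ?_ fun k => hf k k.2
  rwa [Cardinal.mk_Iio_ordinal, Cardinal.lift_lift, ← lift_cof, Cardinal.lift_lt]

end Ordinal

theorem isOddStage_iff_mod_two {i : Ordinal} : IsOddStage i ↔ i % 2 = 1 := by
  constructor
  · rintro ⟨d, n, hd, rfl⟩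
    have hd : 2 * d = d := by
      rcases hd with rfl | hd
      · exact mul_zero 2
      · exact two_mul_of_isSuccLimit hd
    rw [← hd, two_mul_add_mod_two]
    push_cast
    exact two_mul_add_one_mod_two n
  · intro h
    obtain ⟨n, hn⟩ := lt_omega0.1 (mod_lt (i / 2) omega0_ne_zero)
    have hω : 2 * (ω * (i / 2 / ω)) = ω * (i / 2 / ω) := by
      rw [← mul_assoc, mul_omega0 two_pos (natCast_lt_omega0 2)]
    refine ⟨ω * (i / 2 / ω), n, ?_, ?_⟩
    · rcases eq_or_ne (i / 2 / ω) 0 with h0 | h0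
      · left; simp [h0]
      · right; exact isSuccLimit_mul_left isSuccLimit_omega0 (pos_iff_ne_zero.2 h0)
    · conv_lhs => rw [← div_add_mod i 2, h, ← div_add_mod (i / 2) ω, hn]
      push_cast
      rw [mul_add, hω, add_assoc]

theorem isOddStage_two_mul_add_one (a : Ordinal) : IsOddStage (2 * a + 1) :=
  isOddStage_iff_mod_two.2 (two_mul_add_one_mod_two a)

theorem isOddStage_two_mul_add_iff {a b : Ordinal} : IsOddStage (2 * a + b) ↔ IsOddStage b := by
  rw [isOddStage_iff_mod_two, isOddStage_iff_mod_two, two_mul_add_mod_two]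

theorem not_isOddStage_two_mul (a : Ordinal) : ¬ IsOddStage (2 * a) := by
  rw [isOddStage_iff_mod_two, two_mul_mod_two]
  exact zero_ne_one

theorem IsOddStage.eq_two_mul_add_one {i : Ordinal} (hi : IsOddStage i) : i = 2 * (i / 2) + 1 := by
  conv_lhs => rw [← div_add_mod i 2, isOddStage_iff_mod_two.1 hi]

theorem IsOddStage.ne_zero {i : Ordinal} (hi : IsOddStage i) : i ≠ 0 := by
  rintro rfl
  simpa using isOddStage_iff_mod_two.1 hi

section LegalPositions

variable {lam i : Ordinal.{u}} {p : Ordinal.{u} → Ordinal.{u}}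

theorem restrictSeq_of_lt (p : Ordinal.{u} → Ordinal.{u}) {j : Ordinal.{u}} (hj : j < i) :
    restrictSeq p i j = p j :=
  if_pos hj

theorem restrictSeq_congr {q : Ordinal.{u} → Ordinal.{u}} (h : ∀ j < i, p j = q j) :
    restrictSeq p i = restrictSeq q i := by
  funext j
  by_cases hj : j < i
  · simp only [restrictSeq_of_lt _ hj, h j hj]
  · simp only [restrictSeq, if_neg hj]

theorem restrictSeq_comp_restrictSeq {m : Ordinal.{u}} {f : Ordinal.{u} → Ordinal.{u}}
    (hf : ∀ j < m, f j < i) : restrictSeq (restrictSeq p i ∘ f) m = restrictSeq (p ∘ f) m :=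
  restrictSeq_congr fun j hj => restrictSeq_of_lt p (hf j hj)

theorem IsLegalPos.mono {j : Ordinal.{u}} (h : IsLegalPos lam i p) (hji : j ≤ i) :
    IsLegalPos lam j p :=
  ⟨fun k hk => h.1 k (hk.trans_le hji), fun k l hkl hl => h.2.1 k l hkl (hl.trans_le hji),
    fun k hk hkl => h.2.2 k (hk.trans_le hji) hkl⟩

theorem IsLegalPos.apply_le_apply (h : IsLegalPos lam i p) {j k : Ordinal.{u}} (hjk : j ≤ k)
    (hk : k < i) : p j ≤ p k := by
  rcases hjk.lt_or_eq with hjk | rfl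
  · exact (h.2.1 j k hjk hk).le
  · exact le_rfl

theorem IsLegalPos.le_apply (h : IsLegalPos lam i p) {k : Ordinal.{u}} (hk : k < i) : k ≤ p k := by
  induction k using WellFoundedLT.induction with
  | _ k ih => exact le_of_forall_lt fun j hj => (ih j hj (hj.trans hk)).trans_lt (h.2.1 j k hj hk)

theorem IsLegalPos.comp {m : Ordinal.{u}} {f : Ordinal.{u} → Ordinal.{u}} (h : IsLegalPos lam i p)
    (hf : IsNormal f) (hfm : ∀ j < m, f j < i) : IsLegalPos lam m (p ∘ f) := by
  refine ⟨fun j hj => h.1 _ (hfm j hj), fun j k hjk hk => h.2.1 _ _ (hf.strictMono hjk) (hfm k hk),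
    fun j hj hjl => le_antisymm ?_ ?_⟩
  · rw [Function.comp_apply, h.2.2 _ (hfm j hj) (hf.map_isSuccLimit hjl), Ordinal.iSup_le_iff]
    rintro ⟨t, ht⟩
    obtain ⟨k, hkj, htk⟩ := (hf.lt_iff_exists_lt hjl).1 ht
    exact (h.2.1 _ _ htk (hfm k (hkj.trans hj))).le.trans
      (Ordinal.le_iSup (fun k : Iio j => p (f k)) ⟨k, hkj⟩)
  · refine Ordinal.iSup_le_iff.2 fun k => h.apply_le_apply (hf.strictMono k.2).le (hfm j hj)

theorem IsLegalPos.extend {v : Ordinal.{u}} (h : IsLegalPos lam i p) (hvlam : v < lam)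
    (hpv : ∀ k < i, p k < v) (hlim : IsSuccLimit i → v = ⨆ k : Iio i, p k) :
    IsLegalPos lam (i + 1) (extendSeq p i v) := by
  have hv : extendSeq p i v i = v := if_pos rfl
  have hp : ∀ k < i, extendSeq p i v k = p k := fun k hk => if_neg hk.ne
  refine ⟨fun k hk => ?_, fun k l hkl hl => ?_, fun k hk hkl => ?_⟩
  · rcases lt_add_one_iff.1 hk |>.lt_or_eq with hk | rfl
    · exact hp k hk ▸ h.1 k hk
    · rwa [hv]
  · rcases lt_add_one_iff.1 hl |>.lt_or_eq with hl | rfl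
    · rw [hp k (hkl.trans hl), hp l hl]
      exact h.2.1 k l hkl hl
    · rw [hp k hkl, hv]
      exact hpv k hkl
  · rcases lt_add_one_iff.1 hk |>.lt_or_eq with hk | rfl
    · rw [hp k hk, h.2.2 k hk hkl]
      exact iSup_congr fun l => (hp l (l.2.trans hk)).symm
    · rw [hv]
      exact (hlim hkl).trans (iSup_congr fun l => (hp l l.2).symm)

theorem IsLegalPos.extendSeq_add_one_iff {j v : Ordinal.{u}} (h : IsLegalPos lam (j + 1) p) :
    IsLegalPos lam (j + 1 + 1) (extendSeq p (j + 1) v) ↔ v < lam ∧ p j < v := by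
  have hv : extendSeq p (j + 1) v (j + 1) = v := if_pos rfl
  have hp : extendSeq p (j + 1) v j = p j := if_neg (lt_add_one j).ne
  refine ⟨fun h' => ⟨by simpa only [hv] using h'.1 _ (lt_add_one _), ?_⟩, fun ⟨hvl, hjv⟩ =>
    h.extend hvl (fun k hk => (h.apply_le_apply (lt_add_one_iff.1 hk) (lt_add_one j)).trans_lt hjv)
      fun hl => absurd hl (not_isSuccLimit_add_one j)⟩
  simpa only [hv, hp] using h'.2.1 j (j + 1) (lt_add_one j) (lt_add_one _)

theorem IsLegalPos.extendSeq_iSup {L : Ordinal.{u}} (h : IsLegalPos lam L p) (hL : IsSuccLimit L)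
    (hlt : ⨆ k : Iio L, p k < lam) : IsLegalPos lam (L + 1) (extendSeq p L (⨆ k : Iio L, p k)) :=
  h.extend hlt (fun k hk => (h.2.1 k _ (lt_add_one k) (hL.add_one_lt hk)).trans_le
    (Ordinal.le_iSup (fun k : Iio L => p k) ⟨k + 1, hL.add_one_lt hk⟩)) fun _ => rfl

theorem IsLegalPos.extendSeq_iSup_apply {L j : Ordinal.{u}} (h : IsLegalPos lam i p)
    (hL : IsSuccLimit L) (hj : j < i) : extendSeq p L (⨆ k : Iio L, p k) j = p j := by
  by_cases hjL : j = L
  · subst hjL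
    exact (if_pos rfl).trans (h.2.2 j hj hL).symm
  · exact if_neg hjL

end LegalPositions

/-- Recovers `i` from `restrictSeq p i`, because a legal position has `k ≤ p k`. -/
noncomputable def stageOf (q : Ordinal.{u} → Ordinal.{u}) : Ordinal.{u} :=
  sInf {k | k ≠ 0 ∧ q k = 0}

theorem IsLegalPos.stageOf_restrictSeq {lam i : Ordinal.{u}} {p : Ordinal.{u} → Ordinal.{u}}
    (h : IsLegalPos lam i p) (hi : i ≠ 0) : stageOf (restrictSeq p i) = i := by
  refine IsLeast.csInf_eq ⟨⟨hi, if_neg (lt_irrefl i)⟩, fun k ⟨hk0, hk⟩ => not_lt.1 fun hki => ?_⟩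
  rw [restrictSeq_of_lt p hki] at hk
  exact hk0 (nonpos_iff_eq_zero.1 (hk ▸ h.le_apply hki))

abbrev Strategy := Ordinal.{u} → (Ordinal.{u} → Ordinal.{u}) → Ordinal.{u}

/-- `S i q` is player II's move at stage `i` after history `q`: unlike in `IIWinsCubGame`, the
strategy is told the stage. -/
structure IsWinningStrategy (x : Set Cardinal.{u}) (eps lam : Ordinal.{u}) (A : Set Ordinal.{u})
    (S : Strategy.{u}) : Prop where
  legal : ∀ i < eps, IsOddStage i → ∀ p, IsLegalPos lam i p →
    IsLegalPos lam (i + 1) (extendSeq p i (S i (restrictSeq p i)))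
  wins : ∀ p, IsLegalPos lam eps p → (∀ i < eps, IsOddStage i → p i = S i (restrictSeq p i)) →
    ∀ i < eps, IsSuccLimit i → i.cof ∈ x → p i ∈ A

theorem iIWinsCubGame_iff_exists_isWinningStrategy {x : Set Cardinal.{u}} {eps lam : Ordinal.{u}}
    {A : Set Ordinal.{u}} : IIWinsCubGame x eps lam A ↔ ∃ S, IsWinningStrategy x eps lam A S := by
  constructor
  · rintro ⟨σ, hlegal, hwins⟩
    exact ⟨fun _ => σ, hlegal, hwins⟩
  · rintro ⟨S, hlegal, hwins⟩
    have hstage : ∀ i < eps, IsOddStage i → ∀ p, IsLegalPos lam i p →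
        S (stageOf (restrictSeq p i)) (restrictSeq p i) = S i (restrictSeq p i) :=
      fun i _ hi p hp => by rw [hp.stageOf_restrictSeq hi.ne_zero]
    refine ⟨fun q => S (stageOf q) q, fun i hi hodd p hp => ?_, fun p hp hfollow => ?_⟩
    · simpa only [hstage i hi hodd p hp] using hlegal i hi hodd p hp
    · refine hwins p hp fun i hi hodd => ?_
      exact (hfollow i hi hodd).trans (hstage i hi hodd p (hp.mono hi.le))

section Blocks

variable {h : Ordinal.{u} → Ordinal.{u}}

/-- Stage `2 * η + r` (`r < 2`) of the master game is played at stage `2 * h η + r`. -/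
noncomputable def pairIndex (h : Ordinal.{u} → Ordinal.{u}) (ι : Ordinal.{u}) : Ordinal.{u} :=
  2 * h (ι / 2) + ι % 2

theorem pairIndex_two_mul_add (h : Ordinal.{u} → Ordinal.{u}) (η : Ordinal.{u}) {r : Ordinal.{u}}
    (hr : r < 2) : pairIndex h (2 * η + r) = 2 * h η + r := by
  rw [pairIndex, mul_add_div η two_ne_zero, div_eq_zero_of_lt hr, add_zero, two_mul_add_mod_two,
    mod_eq_of_lt hr]

theorem pairIndex_two_mul (h : Ordinal.{u} → Ordinal.{u}) (η : Ordinal.{u}) :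
    pairIndex h (2 * η) = 2 * h η := by
  simpa using pairIndex_two_mul_add h η two_pos

theorem pairIndex_of_isSuccLimit {ι : Ordinal.{u}} (hι : IsSuccLimit ι) :
    pairIndex h ι = 2 * h ι := by
  rw [pairIndex, div_two_of_isSuccLimit hι, mod_two_of_isSuccLimit hι, add_zero]

theorem isNormal_pairIndex (hh : IsNormal h) : IsNormal (pairIndex h) := by
  refine isNormal_iff.2 ⟨fun ι ι' hι => ?_, fun o ho a ha => ?_⟩
  · rcases (div_le_left hι.le 2).lt_or_eq with hlt | heq
    · calc pairIndex h ι < 2 * h (ι / 2) + 2 := add_lt_add_right (mod_lt _ two_ne_zero) _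
        _ = 2 * (h (ι / 2) + 1) := by rw [mul_add, mul_one]
        _ ≤ 2 * h (ι' / 2) := mul_le_mul_right (add_one_le_iff.2 (hh.strictMono hlt)) 2
        _ ≤ pairIndex h ι' := le_self_add
    · rw [← div_add_mod ι 2, ← div_add_mod ι' 2, heq] at hι
      rw [pairIndex, pairIndex, heq]
      exact add_lt_add_right ((add_lt_add_iff_left _).1 hι) _
  · rw [pairIndex_of_isSuccLimit ho]
    refine (((isNormal_mul_right two_pos).comp hh).le_iff_forall_le ho).2 fun η hη => ?_
    simpa only [Function.comp_apply, pairIndex_two_mul] using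
      ha (2 * η) (two_mul_of_isSuccLimit ho ▸ mul_lt_mul_of_pos_left hη two_pos)

/-- The block `ξ` consists of the stages `2 * (h ξ + 1) + k` for `k < blockLength h ξ`; its last
stage is `2 * h (ξ + 1)`. -/
noncomputable def blockLength (h : Ordinal.{u} → Ordinal.{u}) (ξ : Ordinal.{u}) : Ordinal.{u} :=
  2 * (h (ξ + 1) - (h ξ + 1)) + 1

theorem two_mul_add_one_add_blockLength (hh : IsNormal h) (ξ : Ordinal.{u}) :
    2 * (h ξ + 1) + 2 * (h (ξ + 1) - (h ξ + 1)) = 2 * h (ξ + 1) := by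
  rw [← mul_add, Ordinal.add_sub_cancel_of_le (add_one_le_iff.2 (hh.strictMono (lt_add_one ξ)))]

noncomputable def blockIndex (h : Ordinal.{u} → Ordinal.{u}) (i : Ordinal.{u}) : Ordinal.{u} :=
  sSup ((fun η => 2 * h η) ⁻¹' Iic i)

theorem blockIndex_eq (hh : IsNormal h) {ξ i : Ordinal.{u}} (hξi : 2 * h ξ ≤ i)
    (hiξ : i < 2 * h (ξ + 1)) : blockIndex h i = ξ := by
  have hmono : StrictMono fun η => 2 * h η := ((isNormal_mul_right two_pos).comp hh).strictMono
  have : (fun η => 2 * h η) ⁻¹' Iic i = Iic ξ := by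
    ext η
    simp only [mem_preimage, mem_Iic]
    refine ⟨fun hη => not_lt.1 fun hξη => ?_, fun hη => (hmono.monotone hη).trans hξi⟩
    exact (hiξ.trans_le ((hmono.monotone (add_one_le_iff.2 hξη)).trans hη)).false
  rw [blockIndex, this, csSup_Iic]

theorem exists_blockIndex_eq (hh : IsNormal h) (h0 : h 0 = 0) {κ i : Ordinal.{u}}
    (hi : i < 2 * h κ) : ∃ ξ < κ, 2 * h ξ ≤ i ∧ i < 2 * h (ξ + 1) ∧ blockIndex h i = ξ := by
  have hnormal : IsNormal fun η => 2 * h η := (isNormal_mul_right two_pos).comp hh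
  obtain ⟨ξ, hξi, hiξ⟩ := hnormal.exists_map_le_lt_map_succ (x := i) (by simp [h0])
  rw [succ_eq_add_one] at hiξ
  exact ⟨ξ, hnormal.strictMono.lt_iff_lt.1 (hξi.trans_lt hi), hξi, hiξ, blockIndex_eq hh hξi hiξ⟩

end Blocks

section Concat

variable {x : Set Cardinal.{u}} {A : Set Ordinal.{u}} {h : Ordinal.{u} → Ordinal.{u}}
  {κ i lam : Ordinal.{u}} {sM : Strategy.{u}} {τ : Ordinal.{u} → Strategy.{u}} {n : ℕ}
  {p : Ordinal.{u} → Ordinal.{u}}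

theorem two_mul_add_one_le (hh : IsNormal h) (ξ : Ordinal.{u}) : 2 * (h ξ + 1) ≤ 2 * h (ξ + 1) :=
  mul_le_mul_right (add_one_le_iff.2 (hh.strictMono (lt_add_one ξ))) 2

theorem two_mul_apply_eq (hh : IsNormal h) (hκ : IsSuccLimit κ) : 2 * h κ = h κ :=
  two_mul_of_isSuccLimit (hh.map_isSuccLimit hκ)

theorem two_mul_add_one_lt (hh : IsNormal h) (ξ : Ordinal.{u}) : 2 * h ξ + 1 < 2 * h (ξ + 1) :=
  (lt_add_one _).trans_le (two_mul_add_one_eq (h ξ) ▸ two_mul_add_one_le hh ξ)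

theorem odd_stage_cases (hh : IsNormal h) (h0 : h 0 = 0) (hκ : IsSuccLimit κ) (hodd : IsOddStage i)
    (hi : i < h κ) : (∃ ξ < κ, i = 2 * h ξ + 1) ∨
      ∃ ξ < κ, ∃ j < 2 * (h (ξ + 1) - (h ξ + 1)), IsOddStage j ∧ i = 2 * (h ξ + 1) + j := by
  obtain ⟨ξ, hξ, hξi, hiξ, -⟩ := exists_blockIndex_eq hh h0 (two_mul_apply_eq hh hκ ▸ hi)
  have hlt : 2 * h ξ < i := hξi.lt_of_ne fun he => not_isOddStage_two_mul _ (he ▸ hodd)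
  rcases (add_one_le_iff.2 hlt).eq_or_lt with he | hlt'
  · exact Or.inl ⟨ξ, hξ, he.symm⟩
  have hle : 2 * (h ξ + 1) ≤ i := by
    rw [two_mul_add_one_eq]
    exact add_one_le_iff.2 hlt'
  obtain ⟨j, rfl⟩ := le_iff_exists_add.1 hle
  rw [← two_mul_add_one_add_blockLength hh] at hiξ
  exact Or.inr ⟨ξ, hξ, j, (add_lt_add_iff_left _).1 hiξ, isOddStage_two_mul_add_iff.1 hodd, rfl⟩

theorem limit_stage_cases (hh : IsNormal h) (h0 : h 0 = 0) (hκ : IsSuccLimit κ)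
    (hlim : IsSuccLimit i) (hi : i ≤ h κ) : (∃ ι ≤ κ, IsSuccLimit ι ∧ i = 2 * h ι) ∨
      ∃ ξ < κ, ∃ k < blockLength h ξ, IsSuccLimit k ∧ i = 2 * (h ξ + 1) + k := by
  have hblock : ∀ ξ < κ, 2 * (h ξ + 1) ≤ i → i ≤ 2 * h (ξ + 1) →
      ∃ ξ < κ, ∃ k < blockLength h ξ, IsSuccLimit k ∧ i = 2 * (h ξ + 1) + k := by
    intro ξ hξ hle hle'
    obtain ⟨k, rfl⟩ := le_iff_exists_add.1 hle
    rw [← two_mul_add_one_add_blockLength hh] at hle'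
    refine ⟨ξ, hξ, k, lt_add_one_iff.2 ((add_le_add_iff_left _).1 hle'), ?_, rfl⟩
    exact (isSuccLimit_add_iff.1 hlim).resolve_right
      fun h' => not_isSuccLimit_two_mul_add_one _ h'.2
  rcases hi.lt_or_eq with hi | rfl
  swap
  · exact Or.inl ⟨κ, le_rfl, hκ, (two_mul_apply_eq hh hκ).symm⟩
  obtain ⟨ξ, hξ, hξi, hiξ, -⟩ := exists_blockIndex_eq hh h0 (two_mul_apply_eq hh hκ ▸ hi)
  rcases hξi.lt_or_eq with hlt | rfl
  · refine Or.inr (hblock ξ hξ ?_ hiξ.le)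
    rw [two_mul_add_one_eq]
    exact add_one_le_iff.2 (hlim.add_one_lt hlt)
  rcases zero_or_succ_or_isSuccLimit ξ with rfl | ⟨ζ, rfl⟩ | hξl
  · exact absurd (by simp [h0]) hlim.ne_bot
  · rw [succ_eq_add_one] at hξ ⊢
    exact Or.inr (hblock ζ ((lt_add_one ζ).trans hξ) (two_mul_add_one_le hh ζ) le_rfl)
  · exact Or.inl ⟨ξ, hξ.le, hξl, rfl⟩

noncomputable def concatStrategy (h : Ordinal.{u} → Ordinal.{u}) (κ : Ordinal.{u})
    (sM : Strategy.{u}) (τ : Ordinal.{u} → Strategy.{u}) : Strategy.{u} := fun i q =>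
  if i < h κ then
    if i = 2 * h (blockIndex h i) + 1 then
      sM (2 * blockIndex h i + 1) (restrictSeq (q ∘ pairIndex h) (2 * blockIndex h i + 1))
    else
      τ (blockIndex h i) (i - 2 * (h (blockIndex h i) + 1))
        (restrictSeq (q ∘ (2 * (h (blockIndex h i) + 1) + ·))
          (i - 2 * (h (blockIndex h i) + 1)))
  else q (Ordinal.pred i) + 1

theorem two_mul_apply_add_one_lt (hh : IsNormal h) (hκ : IsSuccLimit κ) {ξ : Ordinal.{u}}
    (hξ : ξ < κ) : 2 * h (ξ + 1) < h κ :=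
  two_mul_apply_eq hh hκ ▸ mul_lt_mul_of_pos_left (hh.strictMono (hκ.add_one_lt hξ)) two_pos

theorem concatStrategy_two_mul_add_one (hh : IsNormal h) (hκ : IsSuccLimit κ) {ξ : Ordinal.{u}}
    (hξ : ξ < κ) (q : Ordinal.{u} → Ordinal.{u}) :
    concatStrategy h κ sM τ (2 * h ξ + 1) q =
      sM (2 * ξ + 1) (restrictSeq (q ∘ pairIndex h) (2 * ξ + 1)) := by
  have hlt := two_mul_add_one_lt hh ξ
  rw [concatStrategy, if_pos (hlt.trans_le (two_mul_apply_add_one_lt hh hκ hξ).le),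
    blockIndex_eq hh le_self_add hlt, if_pos rfl]

theorem concatStrategy_two_mul_add_one_add (hh : IsNormal h) (hκ : IsSuccLimit κ)
    {ξ j : Ordinal.{u}} (hξ : ξ < κ) (hj : j < 2 * (h (ξ + 1) - (h ξ + 1)))
    (q : Ordinal.{u} → Ordinal.{u}) :
    concatStrategy h κ sM τ (2 * (h ξ + 1) + j) q =
      τ ξ j (restrictSeq (q ∘ (2 * (h ξ + 1) + ·)) j) := by
  have hlt : 2 * (h ξ + 1) + j < 2 * h (ξ + 1) :=
    two_mul_add_one_add_blockLength hh ξ ▸ (add_lt_add_iff_left _).2 hj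
  have hle : 2 * h ξ + 1 + 1 ≤ 2 * (h ξ + 1) + j := two_mul_add_one_eq (h ξ) ▸ le_self_add
  rw [concatStrategy, if_pos (hlt.trans_le (two_mul_apply_add_one_lt hh hκ hξ).le),
    blockIndex_eq hh (le_self_add.trans ((le_add_right le_rfl).trans hle)) hlt,
    if_neg ((lt_add_one _).trans_le hle).ne', Ordinal.add_sub_cancel]

theorem concatStrategy_of_le (hi : h κ ≤ i) (q : Ordinal.{u} → Ordinal.{u}) :
    concatStrategy h κ sM τ i q = q (Ordinal.pred i) + 1 :=
  if_neg (not_lt.2 hi)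

theorem lt_of_lt_blockLength {ξ j : Ordinal.{u}} (hj : j < blockLength h ξ) (hodd : IsOddStage j) :
    j < 2 * (h (ξ + 1) - (h ξ + 1)) :=
  (lt_add_one_iff.1 hj).lt_of_ne (by rintro rfl; exact not_isOddStage_two_mul _ hodd)

theorem pairIndex_lt_two_mul_add_one (hh : IsNormal h) {ξ ι : Ordinal.{u}} (hι : ι < 2 * ξ + 1) :
    pairIndex h ι < 2 * h ξ + 1 :=
  lt_add_one_iff.2 (pairIndex_two_mul h ξ ▸ (isNormal_pairIndex hh).monotone (lt_add_one_iff.1 hι))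

theorem concatStrategy_legal (hh : IsNormal h) (h0 : h 0 = 0) (hκ : IsSuccLimit κ)
    (hlam : IsSuccLimit lam) (hM : IsWinningStrategy x (κ + 1) lam A sM)
    (hτ : ∀ ξ < κ, IsWinningStrategy x (blockLength h ξ) lam A (τ ξ)) (hodd : IsOddStage i)
    {p : Ordinal.{u} → Ordinal.{u}} (hp : IsLegalPos lam i p) :
    IsLegalPos lam (i + 1) (extendSeq p i (concatStrategy h κ sM τ i (restrictSeq p i))) := by
  rcases lt_or_ge i (h κ) with hi | hi
  · rcases odd_stage_cases hh h0 hκ hodd hi with ⟨ξ, hξ, rfl⟩ | ⟨ξ, hξ, j, hj, hjodd, rfl⟩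
    · have hmaster : IsLegalPos lam (2 * ξ + 1) (p ∘ pairIndex h) :=
        hp.comp (isNormal_pairIndex hh) fun ι hι => pairIndex_lt_two_mul_add_one hh hι
      have hξ' : 2 * ξ + 1 < κ + 1 := lt_add_one_iff.2 (hκ.add_one_lt
        ((mul_lt_mul_of_pos_left hξ two_pos).trans_eq (two_mul_of_isSuccLimit hκ))).le
      have hmove := hM.legal _ hξ' (isOddStage_two_mul_add_one ξ) _ hmaster
      rw [hmaster.extendSeq_add_one_iff, Function.comp_apply, pairIndex_two_mul] at hmove
      rwa [concatStrategy_two_mul_add_one hh hκ hξ, hp.extendSeq_add_one_iff,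
        restrictSeq_comp_restrictSeq fun ι hι => pairIndex_lt_two_mul_add_one hh hι]
    · have hblock : IsLegalPos lam j (p ∘ (2 * (h ξ + 1) + ·)) :=
        hp.comp (isNormal_add_right _) fun k hk => (add_lt_add_iff_left _).2 hk
      have hmove := (hτ ξ hξ).legal j (hj.trans (lt_add_one _)) hjodd _ hblock
      rw [concatStrategy_two_mul_add_one_add hh hκ hξ hj,
        restrictSeq_comp_restrictSeq fun k hk => (add_lt_add_iff_left _).2 hk]
      obtain ⟨j', rfl⟩ : ∃ j', j = j' + 1 := ⟨_, hjodd.eq_two_mul_add_one⟩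
      rw [hblock.extendSeq_add_one_iff, Function.comp_apply] at hmove
      rw [← add_assoc] at hp ⊢
      rwa [hp.extendSeq_add_one_iff]
  · rw [concatStrategy_of_le hi]
    obtain ⟨i', rfl⟩ : ∃ i', i = i' + 1 := ⟨_, hodd.eq_two_mul_add_one⟩
    rw [hp.extendSeq_add_one_iff, pred_add_one, restrictSeq_of_lt p (lt_add_one i')]
    exact ⟨hlam.add_one_lt (hp.1 i' (lt_add_one i')), lt_add_one _⟩

theorem two_mul_add_one_add_lt (hh : IsNormal h) (hκ : IsSuccLimit κ) {ξ k : Ordinal.{u}}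
    (hξ : ξ < κ) (hk : k < blockLength h ξ) : 2 * (h ξ + 1) + k < h κ := by
  refine lt_of_le_of_lt ?_ (two_mul_apply_add_one_lt hh hκ hξ)
  rw [← two_mul_add_one_add_blockLength hh]
  exact add_le_add_right (lt_add_one_iff.1 hk) _

theorem blockLength_lt (hh : IsNormal h) (hκ : IsSuccLimit κ) {ξ : Ordinal.{u}} (hξ : ξ < κ) :
    blockLength h ξ < h κ := by
  refine (hh.map_isSuccLimit hκ).add_one_lt (lt_of_le_of_lt ?_ (two_mul_apply_add_one_lt hh hκ hξ))
  rw [← two_mul_add_one_add_blockLength hh]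
  exact le_add_left le_rfl

/-- Its last move is `⨆ k < h κ, p k` rather than `p (h κ)`, since stage `h κ` need not exist. -/
noncomputable def masterPlay (h : Ordinal.{u} → Ordinal.{u}) (κ : Ordinal.{u})
    (p : Ordinal.{u} → Ordinal.{u}) : Ordinal.{u} → Ordinal.{u} :=
  extendSeq p (h κ) (⨆ k : Iio (h κ), p k) ∘ pairIndex h

theorem masterPlay_of_lt (hh : IsNormal h) (hκ : IsSuccLimit κ) (hp : IsLegalPos lam (h κ + n) p)
    {ι : Ordinal.{u}} (hι : pairIndex h ι < h κ + n) : masterPlay h κ p ι = p (pairIndex h ι) :=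
  hp.extendSeq_iSup_apply (hh.map_isSuccLimit hκ) hι

theorem isLegalPos_masterPlay (hh : IsNormal h) (hκ : IsSuccLimit κ)
    (hp : IsLegalPos lam (h κ + n) p) (hsup : ⨆ k : Iio (h κ), p k < lam) :
    IsLegalPos lam (κ + 1) (masterPlay h κ p) := by
  refine ((hp.mono le_self_add).extendSeq_iSup (hh.map_isSuccLimit hκ) hsup).comp
    (isNormal_pairIndex hh) fun ι hι => lt_add_one_iff.2 ?_
  rw [← two_mul_apply_eq hh hκ, ← pairIndex_of_isSuccLimit hκ]
  exact (isNormal_pairIndex hh).monotone (lt_add_one_iff.1 hι)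

theorem masterPlay_follows (hh : IsNormal h) (hκ : IsSuccLimit κ) (hp : IsLegalPos lam (h κ + n) p)
    (hfollow : ∀ i < h κ + n, IsOddStage i → p i = concatStrategy h κ sM τ i (restrictSeq p i))
    {ι : Ordinal.{u}} (hι : ι < κ + 1) (hodd : IsOddStage ι) :
    masterPlay h κ p ι = sM ι (restrictSeq (masterPlay h κ p) ι) := by
  obtain ⟨η, rfl⟩ : ∃ η, ι = 2 * η + 1 := ⟨_, hodd.eq_two_mul_add_one⟩
  have hη : η < κ :=
    (le_mul_right η two_pos).trans_lt ((lt_add_one _).trans_le (lt_add_one_iff.1 hι))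
  have hlt : 2 * h η + 1 < h κ + n :=
    ((two_mul_add_one_lt hh η).trans_le (two_mul_apply_add_one_lt hh hκ hη).le).trans_le le_self_add
  have hrestrict : restrictSeq (masterPlay h κ p) (2 * η + 1) =
      restrictSeq (p ∘ pairIndex h) (2 * η + 1) :=
    restrictSeq_congr fun ι' hι' =>
      masterPlay_of_lt hh hκ hp ((pairIndex_lt_two_mul_add_one hh hι').trans hlt)
  have hpair : pairIndex h (2 * η + 1) = 2 * h η + 1 := pairIndex_two_mul_add h η one_lt_two
  rw [masterPlay_of_lt hh hκ hp (hpair ▸ hlt), hpair, hfollow _ hlt (isOddStage_two_mul_add_one _),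
    concatStrategy_two_mul_add_one hh hκ hη,
    restrictSeq_comp_restrictSeq fun ι' hι' => pairIndex_lt_two_mul_add_one hh hι', hrestrict]

theorem blockPlay_follows (hh : IsNormal h) (hκ : IsSuccLimit κ)
    (hfollow : ∀ i < h κ + n, IsOddStage i → p i = concatStrategy h κ sM τ i (restrictSeq p i))
    {ξ k : Ordinal.{u}} (hξ : ξ < κ) (hk : k < blockLength h ξ) (hodd : IsOddStage k) :
    (p ∘ (2 * (h ξ + 1) + ·)) k = τ ξ k (restrictSeq (p ∘ (2 * (h ξ + 1) + ·)) k) := by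
  rw [Function.comp_apply, hfollow _ ((two_mul_add_one_add_lt hh hκ hξ hk).trans_le le_self_add)
      (isOddStage_two_mul_add_iff.2 hodd),
    concatStrategy_two_mul_add_one_add hh hκ hξ (lt_of_lt_blockLength hk hodd),
    restrictSeq_comp_restrictSeq fun k' hk' => (add_lt_add_iff_left _).2 hk']

theorem concatStrategy_wins (hh : IsNormal h) (h0 : h 0 = 0) (hκ : IsSuccLimit κ)
    (hcard : (h κ).card < lam.cof) (hM : IsWinningStrategy x (κ + 1) lam A sM)
    (hτ : ∀ ξ < κ, IsWinningStrategy x (blockLength h ξ) lam A (τ ξ))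
    (hp : IsLegalPos lam (h κ + n) p)
    (hfollow : ∀ i < h κ + n, IsOddStage i → p i = concatStrategy h κ sM τ i (restrictSeq p i))
    {i : Ordinal.{u}} (hi : i < h κ + n) (hlim : IsSuccLimit i) (hx : i.cof ∈ x) : p i ∈ A := by
  have hiκ : i ≤ h κ := not_lt.1 fun hκi => (hlim.add_natCast_lt hκi n).not_gt hi
  rcases limit_stage_cases hh h0 hκ hlim hiκ with ⟨ι, hικ, hι, rfl⟩ | ⟨ξ, hξ, k, hk, hkl, rfl⟩
  · have hsup : ⨆ k : Iio (h κ), p k < lam :=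
      iSup_Iio_lt_of_card_lt_cof hcard fun k hk => hp.1 k (hk.trans_le le_self_add)
    rw [← pairIndex_of_isSuccLimit hι] at hx hi ⊢
    rw [← masterPlay_of_lt hh hκ hp hi]
    exact hM.wins _ (isLegalPos_masterPlay hh hκ hp hsup)
      (fun ι' hι' hodd => masterPlay_follows hh hκ hp hfollow hι' hodd) ι (lt_add_one_iff.2 hικ) hι
      (cof_map_of_isNormal (isNormal_pairIndex hh) hι ▸ hx)
  · have hblock : IsLegalPos lam (blockLength h ξ) (p ∘ (2 * (h ξ + 1) + ·)) :=
      hp.comp (isNormal_add_right _) fun k' hk' =>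
        (two_mul_add_one_add_lt hh hκ hξ hk').trans_le le_self_add
    exact (hτ ξ hξ).wins _ hblock (fun k' hk' hodd => blockPlay_follows hh hκ hfollow hξ hk' hodd)
      k hk hkl (cof_map_of_isNormal (isNormal_add_right _) hkl ▸ hx)

theorem isWinningStrategy_concatStrategy (n : ℕ) (hh : IsNormal h) (h0 : h 0 = 0)
    (hκ : IsSuccLimit κ) (hcard : (h κ).card < lam.cof) (hM : IsWinningStrategy x (κ + 1) lam A sM)
    (hτ : ∀ ξ < κ, IsWinningStrategy x (blockLength h ξ) lam A (τ ξ)) :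
    IsWinningStrategy x (h κ + n) lam A (concatStrategy h κ sM τ) := by
  have hlam : IsSuccLimit lam := one_lt_cof_iff.1
    ((one_lt_cof_iff.2 (hh.map_isSuccLimit hκ)).trans_le ((cof_le_card _).trans hcard.le))
  exact ⟨fun _ _ hodd _ hp => concatStrategy_legal hh h0 hκ hlam hM hτ hodd hp,
    fun _ hp hfollow _ hi hlim hx => concatStrategy_wins hh h0 hκ hcard hM hτ hp hfollow hi hlim hx⟩

end Concat

theorem IIWinsCubGame.add_natCast {x : Set Cardinal.{u}} {A : Set Ordinal.{u}} {L lam : Ordinal.{u}}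
    (n : ℕ) (hL : IsSuccLimit L) (hcard : L.card < lam.cof)
    (hM : IIWinsCubGame x (L.cof.ord + 1) lam A) (hB : ∀ ε < L, IIWinsCubGame x ε lam A) :
    IIWinsCubGame x (L + n) lam A := by
  obtain ⟨h, hh, h0, hhκ⟩ := exists_isNormal_apply_ord_cof L
  have hκ : IsSuccLimit L.cof.ord := isSuccLimit_ord (aleph0_le_cof_iff.2 (one_lt_cof_iff.2 hL))
  obtain ⟨sM, hsM⟩ := iIWinsCubGame_iff_exists_isWinningStrategy.1 hM
  have hblocks : ∀ ξ, ∃ S, ξ < L.cof.ord → IsWinningStrategy x (blockLength h ξ) lam A S := by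
    intro ξ
    by_cases hξ : ξ < L.cof.ord
    · obtain ⟨S, hS⟩ := iIWinsCubGame_iff_exists_isWinningStrategy.1
        (hB _ (hhκ ▸ blockLength_lt hh hκ hξ))
      exact ⟨S, fun _ => hS⟩
    · exact ⟨fun _ _ => 0, fun h => absurd h hξ⟩
  choose τ hτ using hblocks
  rw [← hhκ] at hcard ⊢
  exact iIWinsCubGame_iff_exists_isWinningStrategy.2
    ⟨_, isWinningStrategy_concatStrategy n hh h0 hκ hcard hsM hτ⟩

theorem stmt6_general (μ : Cardinal) (hinf : ℵ₀ ≤ μ) (A : Set Ordinal)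
    (x : Set Cardinal)
    (h1 : ∀ eps < μ.ord, IIWinsCubGame x eps (Order.succ μ).ord A)
    (h2 : μ.IsRegular → IIWinsCubGame x (μ.ord + 1) (Order.succ μ).ord A) :
    ∀ σo < (Order.succ μ).ord, IIWinsCubGame x σo (Order.succ μ).ord A := by
  intro σo
  induction σo using WellFoundedLT.induction with
  | _ σo IH =>
    intro hσ
    rcases lt_or_ge σo μ.ord with hσμ | hμσ
    · exact h1 σo hσμ
    obtain ⟨n, hn⟩ := lt_omega0.1 (mod_lt σo omega0_ne_zero)
    have hL : IsSuccLimit (ω * (σo / ω)) := isSuccLimit_mul_left isSuccLimit_omega0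
      ((div_pos omega0_ne_zero).2 ((ord_aleph0 ▸ ord_le_ord.2 hinf).trans hμσ))
    rw [← div_add_mod σo ω, hn] at hσ IH ⊢
    have hcard : (ω * (σo / ω)).card < Order.succ μ :=
      (card_le_card le_self_add).trans_lt (lt_ord.1 hσ)
    refine IIWinsCubGame.add_natCast n hL (by rwa [(isRegular_succ hinf).cof_ord]) ?_
      fun ε hε => IH ε (hε.trans_le le_self_add) (hε.trans_le le_self_add |>.trans hσ)
    rcases (lt_succ_iff.1 ((cof_le_card _).trans_lt hcard)).lt_or_eq with hlt | heq
    · exact h1 _ ((isSuccLimit_ord hinf).add_one_lt (ord_lt_ord.2 hlt))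
    · exact heq ▸ h2 (heq ▸ isRegular_cof hL)

/-- If `λ = μ⁺` and player II wins `𝔊^x_ε(A, λ)` for every `ε < μ` (and, in case `μ` is
regular, also the game of length `μ + 1`), then player II wins `𝔊^x_σ(A, λ)` for every
`σ < λ`. -/
theorem stmt6 (μ : Cardinal) (hinf : ℵ₀ ≤ μ) (A : Set Ordinal)
    (hA : A ⊆ Set.Iio (Order.succ μ).ord) (x : Set Cardinal)
    (hx : ∀ c ∈ x, c.IsRegular ∧ c.ord < (Order.succ μ).ord)
    (h1 : ∀ eps < μ.ord, IIWinsCubGame x eps (Order.succ μ).ord A)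
    (h2 : μ.IsRegular → IIWinsCubGame x (μ.ord + 1) (Order.succ μ).ord A) :
    ∀ σo < (Order.succ μ).ord, IIWinsCubGame x σo (Order.succ μ).ord A :=
  stmt6_general μ hinf A x h1 h2
end

section
/- Let κ₀ > κ₁ > ⋯ > κ_{k-1} be a finite decreasing sequence of regular cardinals and let X ⊆ ∏_{i<k} κ_i. Define π : ∏_{i<k} κ_i → X by: π(σ) = τ iff for each i < k, τ(i) is the σ(i)-th element (in increasing order) of {τ'(i) : τ' ∈ X, τ'↾i = τ↾i} (assuming X is such that π is well-defined and onto X). If the complement of X is in the product of nonstationary ideals NS(κ̄), then for every B ⊆ ∏ κ_i: ∏κ_i \ B ∈ NS(κ̄) if and only if π⁻¹[X \ B] ∈ NS(κ̄). -/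
open Cardinal Set


/-- `C` is a closed unbounded subset of the ordinal `o`. -/
def IsClubIn (C : Set Ordinal) (o : Ordinal) : Prop :=
  C ⊆ Set.Iio o ∧ (∀ b < o, ∃ c ∈ C, b < c) ∧
    (∀ b < o, b ≠ 0 → (∀ d < b, ∃ c ∈ C, d < c ∧ c < b) → b ∈ C)

/-- `S` is stationary in the (limit) ordinal `o`. -/
def IsStationaryIn (S : Set Ordinal) (o : Ordinal) : Prop :=
  Order.IsSuccLimit o ∧ ∀ C : Set Ordinal, IsClubIn C o → (S ∩ C).Nonempty

/-- `S` is small with respect to the cardinal `c`: nonstationary in `c` if `c` is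
uncountable, bounded in `c` if `c` is countable. -/
def SmallInNS (c : Cardinal) (S : Set Ordinal) : Prop :=
  (ℵ₀ < c → ¬ IsStationaryIn S c.ord) ∧ (c ≤ ℵ₀ → ∃ b < c.ord, ∀ x ∈ S, x < b)

/-- membership in the iterated product ideal `NS(κ̄)` of the nonstationary ideals
(bounded ideal on `ℵ₀`) on a finite decreasing sequence of regular cardinals. -/
def InProdNS : {k : ℕ} → (Fin k → Cardinal) → Set (Fin k → Ordinal) → Prop
  | 0, _, X => X = ∅
  | _ + 1, κs, X =>
      SmallInNS (κs 0)
        {a : Ordinal | a < (κs 0).ord ∧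
          ¬ InProdNS (fun i => κs i.succ) {τ | Fin.cons a τ ∈ X}}

/-!
Induction on `k`. Let `S₀` be the set of first coordinates of `X` and `e` its increasing
enumeration, so that `π σ 0 = e (σ 0)`. Since the complement of `X` is `NS(κ̄)`-small, the set
`G ⊆ S₀` of heads whose section of `X` has small complement is co-small in `κ₀`. The enumeration
of a co-small subset of a regular cardinal preserves the ideal: clubs pull back along it, and
clubs inside the co-small set push forward along it. For `e a ∈ G` the remaining coordinates of
`π (a, ·)` enumerate the section of `X` at `e a` canonically, so the induction hypothesis matches
the section at `a` of `π⁻¹[X \ B]` with the section at `e a` of `∏κ̄ \ B`; the heads outside `G`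
contribute only a small set.
-/

theorem iSup_nat_lt_ord {κ : Cardinal} (hκ : κ.IsRegular) (h : ℵ₀ < κ) {f : ℕ → Ordinal}
    (hf : ∀ n, f n < κ.ord) : ⨆ n, f n < κ.ord :=
  Ordinal.lift_iSup_lt_of_lt_cof (by simpa [← Ordinal.lift_cof, hκ.cof_ord] using h) hf

theorem iSup_Iio_lt_ord {κ : Cardinal} (hκ : κ.IsRegular) {o : Ordinal} (ho : o < κ.ord)
    {f : Iio o → Ordinal} (hf : ∀ c, f c < κ.ord) : ⨆ c, f c < κ.ord :=
  Ordinal.lift_iSup_lt_of_lt_cof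
    (by rwa [← Ordinal.lift_cof, hκ.cof_ord, mk_Iio_ordinal, lift_lift, lift_lt, ← lt_ord]) hf

theorem not_bddAbove_union_Ici (S : Set Ordinal) (o : Ordinal) : ¬ BddAbove (S ∪ Ici o) :=
  not_bddAbove_iff.2 fun x => ⟨Order.succ (max x o),
    Or.inr ((le_max_right x o).trans (Order.le_succ _)),
    (le_max_left x o).trans_lt (Order.lt_succ _)⟩

section Club

variable {o : Ordinal} {C D : Set Ordinal}

theorem IsClubIn.iSup_mem {ι : Type*} [Nonempty ι] (hC : IsClubIn C o) {f : ι → Ordinal}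
    (hlt : ⨆ i, f i < o) (hf : ∀ i, ∃ c ∈ C, f i < c ∧ c < ⨆ i, f i) : ⨆ i, f i ∈ C := by
  refine hC.2.2 _ hlt ?_ fun d hd => ?_
  · obtain ⟨c, -, -, hc⟩ := hf (Classical.arbitrary ι)
    exact (zero_le.trans_lt hc).ne'
  · obtain ⟨i, hi⟩ := exists_lt_of_lt_ciSup hd
    obtain ⟨c, hcC, hic, hc⟩ := hf i
    exact ⟨c, hcC, hi.trans hic, hc⟩

theorem IsClubIn.inter {κ : Cardinal} (hκ : κ.IsRegular) (h : ℵ₀ < κ)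
    (hC : IsClubIn C κ.ord) (hD : IsClubIn D κ.ord) : IsClubIn (C ∩ D) κ.ord := by
  refine ⟨fun x hx => hC.1 hx.1, fun b hb => ?_, fun b hb hb0 hdense => ?_⟩
  · -- climb alternately into `C` and `D`; the supremum of the ω-sequence lies in both
    have hclimb : ∀ x < κ.ord, ∃ d, (d ∈ D ∧ x < d ∧ d < κ.ord) ∧ ∃ c ∈ C, x < c ∧ c < d := by
      intro x hx
      obtain ⟨c, hc, hxc⟩ := hC.2.1 x hx
      obtain ⟨d, hd, hcd⟩ := hD.2.1 c (hC.1 hc)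
      exact ⟨d, ⟨hd, hxc.trans hcd, hD.1 hd⟩, c, hc, hxc, hcd⟩
    choose! g hgD hgC using hclimb
    set f : ℕ → Ordinal := fun n => g^[n + 1] b
    have hf_succ : ∀ n, f (n + 1) = g (f n) := fun n => Function.iterate_succ_apply' g (n + 1) b
    have hf_lt : ∀ n, f n < κ.ord := by
      intro n
      induction n with
      | zero => exact (hgD b hb).2.2
      | succ n ih => rw [hf_succ]; exact (hgD _ ih).2.2
    have hsup := iSup_nat_lt_ord hκ h hf_lt
    have hf_le : ∀ n, f n ≤ ⨆ n, f n := le_ciSup Ordinal.bddAbove_of_small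
    have hf_mono : ∀ n, f n < f (n + 1) := fun n => hf_succ n ▸ (hgD _ (hf_lt n)).2.1
    refine ⟨_, ⟨hC.iSup_mem hsup fun n => ?_, hD.iSup_mem hsup fun n => ?_⟩,
      (hgD b hb).2.1.trans_le (hf_le 0)⟩
    · obtain ⟨c, hc, hnc, hcg⟩ := hgC _ (hf_lt n)
      exact ⟨c, hc, hnc, hcg.trans_le (hf_succ n ▸ hf_le (n + 1))⟩
    · exact ⟨f (n + 1), hf_succ n ▸ (hgD _ (hf_lt n)).1, hf_mono n,
        (hf_mono (n + 1)).trans_le (hf_le (n + 2))⟩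
  · exact ⟨hC.2.2 b hb hb0 fun d hd => (hdense d hd).imp fun c hc => ⟨hc.1.1, hc.2⟩,
      hD.2.2 b hb hb0 fun d hd => (hdense d hd).imp fun c hc => ⟨hc.1.2, hc.2⟩⟩

end Club

namespace SmallInNS

variable {κ : Cardinal} {A A' N : Set Ordinal}

theorem iff_exists_club (h : ℵ₀ < κ) :
    SmallInNS κ A ↔ ∃ C, IsClubIn C κ.ord ∧ Disjoint A C := by
  have hlim : Order.IsSuccLimit κ.ord := isSuccLimit_ord h.le
  simp only [SmallInNS, IsStationaryIn, h, h.not_ge, hlim, true_and, false_imp_iff, and_true,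
    true_imp_iff, not_forall, not_nonempty_iff_eq_empty, ← disjoint_iff_inter_eq_empty, exists_prop]

theorem iff_bddAbove (h : κ ≤ ℵ₀) :
    SmallInNS κ A ↔ ∃ b < κ.ord, ∀ x ∈ A, x < b := by
  simp [SmallInNS, h, h.not_gt]

theorem mono (hA : SmallInNS κ A) (h : A' ⊆ A) : SmallInNS κ A' :=
  ⟨fun hκ hst => hA.1 hκ ⟨hst.1, fun C hC => (hst.2 C hC).mono (inter_subset_inter_left C h)⟩,
    fun hκ => (hA.2 hκ).imp fun _ ⟨hb, hA⟩ => ⟨hb, fun x hx => hA x (h hx)⟩⟩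

theorem union (hκ : κ.IsRegular) (hA : SmallInNS κ A) (hA' : SmallInNS κ A') :
    SmallInNS κ (A ∪ A') := by
  rcases lt_or_ge ℵ₀ κ with h | h
  · rw [iff_exists_club h] at hA hA' ⊢
    obtain ⟨C, hC, hAC⟩ := hA
    obtain ⟨D, hD, hA'D⟩ := hA'
    exact ⟨C ∩ D, hC.inter hκ h hD, disjoint_union_left.2
      ⟨hAC.mono_right inter_subset_left, hA'D.mono_right inter_subset_right⟩⟩
  · rw [iff_bddAbove h] at hA hA' ⊢
    obtain ⟨b, hb, hAb⟩ := hA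
    obtain ⟨c, hc, hA'c⟩ := hA'
    refine ⟨max b c, max_lt hb hc, ?_⟩
    rintro x (hx | hx)
    exacts [(hAb x hx).trans_le (le_max_left b c), (hA'c x hx).trans_le (le_max_right b c)]

theorem iff_of_subset_union (hκ : κ.IsRegular) (hN : SmallInNS κ N) (h : A ⊆ A' ∪ N)
    (h' : A' ⊆ A ∪ N) : SmallInNS κ A ↔ SmallInNS κ A' :=
  ⟨fun hA => (hA.union hκ hN).mono h', fun hA' => (hA'.union hκ hN).mono h⟩

theorem not_Iio (hκ : κ.IsRegular) : ¬ SmallInNS κ (Iio κ.ord) := by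
  rcases lt_or_ge ℵ₀ κ with h | h
  · rintro hs
    obtain ⟨C, hC, hdisj⟩ := (iff_exists_club h).1 hs
    obtain ⟨c, hc, -⟩ := hC.2.1 0 (isSuccLimit_ord hκ.aleph0_le).bot_lt
    exact hdisj.notMem_of_mem_right hc (hC.1 hc)
  · rintro hs
    obtain ⟨b, hb, hbd⟩ := (iff_bddAbove h).1 hs
    exact (hbd b hb).false

end SmallInNS

def IsUnboundedIn (S : Set Ordinal) (o : Ordinal) : Prop :=
  S ⊆ Iio o ∧ ∀ b < o, ∃ s ∈ S, b < s

namespace IsUnboundedIn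

variable {κ : Cardinal} {S : Set Ordinal} {c o s : Ordinal}

theorem enumOrd_union_Ici_lt_ord (hS : IsUnboundedIn S κ.ord) (hκ : κ.IsRegular)
    (ho : o < κ.ord) :
    Ordinal.enumOrd (S ∪ Ici κ.ord) o < κ.ord := by
  induction o using WellFoundedLT.induction with
  | ind o IH =>
    obtain ⟨s, hs, hlt⟩ := hS.2 _ (iSup_Iio_lt_ord hκ ho fun c => IH c c.2 (c.2.trans ho))
    refine (Ordinal.enumOrd_le_of_forall_lt (Or.inl hs) fun c hc => ?_).trans_lt (hS.1 hs)
    exact (Ordinal.le_iSup (fun c : Iio o => Ordinal.enumOrd (S ∪ Ici κ.ord) c) ⟨c, hc⟩).trans_lt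
      hlt

/- Below `κ.ord`, the enumeration of a cofinal `S ⊆ κ.ord` agrees with that of the unbounded set
`S ∪ Ici κ.ord`, to which the library's theory of `enumOrd` applies. -/
theorem enumOrd_eq_enumOrd_union_Ici (hS : IsUnboundedIn S κ.ord) (hκ : κ.IsRegular)
    (ho : o < κ.ord) :
    Ordinal.enumOrd S o = Ordinal.enumOrd (S ∪ Ici κ.ord) o := by
  induction o using WellFoundedLT.induction with
  | ind o IH =>
    set T := S ∪ Ici κ.ord
    have hT := not_bddAbove_union_Ici S κ.ord
    have hlt := hS.enumOrd_union_Ici_lt_ord hκ ho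
    have hTS : Ordinal.enumOrd T o ∈ S :=
      (Ordinal.enumOrd_mem hT o).resolve_right hlt.not_ge
    have hmem : Ordinal.enumOrd T o ∈ S ∩ {b | ∀ c < o, Ordinal.enumOrd S c < b} :=
      ⟨hTS, fun c hc => IH c hc (hc.trans ho) ▸ Ordinal.enumOrd_strictMono hT hc⟩
    have hspec : Ordinal.enumOrd S o ∈ S ∩ {b | ∀ c < o, Ordinal.enumOrd S c < b} := by
      rw [Ordinal.enumOrd]
      exact csInf_mem ⟨_, hmem⟩
    refine (Ordinal.enumOrd_le_of_forall_lt hTS fun c hc => ?_).antisymm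
      (Ordinal.enumOrd_le_of_forall_lt (Or.inl hspec.1) fun c hc => ?_)
    · exact hmem.2 c hc
    · exact IH c hc (hc.trans ho) ▸ hspec.2 c hc

theorem enumOrd_mem (hS : IsUnboundedIn S κ.ord) (hκ : κ.IsRegular) (ho : o < κ.ord) :
    Ordinal.enumOrd S o ∈ S := by
  rw [hS.enumOrd_eq_enumOrd_union_Ici hκ ho]
  exact (Ordinal.enumOrd_mem (not_bddAbove_union_Ici S κ.ord) o).resolve_right
    (hS.enumOrd_union_Ici_lt_ord hκ ho).not_ge

theorem enumOrd_lt_ord (hS : IsUnboundedIn S κ.ord) (hκ : κ.IsRegular) (ho : o < κ.ord) :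
    Ordinal.enumOrd S o < κ.ord :=
  hS.1 (hS.enumOrd_mem hκ ho)

theorem enumOrd_lt_enumOrd (hS : IsUnboundedIn S κ.ord) (hκ : κ.IsRegular) (hc : c < κ.ord)
    (ho : o < κ.ord) : Ordinal.enumOrd S c < Ordinal.enumOrd S o ↔ c < o := by
  rw [hS.enumOrd_eq_enumOrd_union_Ici hκ ho, hS.enumOrd_eq_enumOrd_union_Ici hκ hc]
  exact Ordinal.enumOrd_lt_enumOrd (not_bddAbove_union_Ici S κ.ord)

theorem le_enumOrd (hS : IsUnboundedIn S κ.ord) (hκ : κ.IsRegular) (ho : o < κ.ord) :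
    o ≤ Ordinal.enumOrd S o :=
  hS.enumOrd_eq_enumOrd_union_Ici hκ ho ▸ Ordinal.le_enumOrd_self (not_bddAbove_union_Ici S κ.ord)

theorem exists_enumOrd_eq (hS : IsUnboundedIn S κ.ord) (hκ : κ.IsRegular) (hs : s ∈ S) :
    ∃ o < κ.ord, Ordinal.enumOrd S o = s := by
  have hT := not_bddAbove_union_Ici S κ.ord
  obtain ⟨o, rfl⟩ := Ordinal.enumOrd_surjective hT (Or.inl hs)
  have ho : o < κ.ord := by
    by_contra! h
    exact (hS.1 hs).not_ge
      ((Ordinal.le_enumOrd_self hT).trans ((Ordinal.enumOrd_le_enumOrd hT).2 h))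
  exact ⟨o, ho, hS.enumOrd_eq_enumOrd_union_Ici hκ ho⟩

end IsUnboundedIn

section ClubEnumOrd

variable {κ : Cardinal} {S C D : Set Ordinal}

theorem IsClubIn.preimage_enumOrd (hC : IsClubIn C κ.ord) (hS : IsUnboundedIn S κ.ord)
    (hκ : κ.IsRegular) (hCS : C ⊆ S) :
    IsClubIn {a | a < κ.ord ∧ Ordinal.enumOrd S a ∈ C} κ.ord := by
  set e := Ordinal.enumOrd S
  refine ⟨fun a ha => ha.1, fun b hb => ?_, fun b hb hb0 hdense => ⟨hb, ?_⟩⟩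
  · obtain ⟨c, hc, hbc⟩ := hC.2.1 _ (hS.enumOrd_lt_ord hκ hb)
    obtain ⟨a, ha, rfl⟩ := hS.exists_enumOrd_eq hκ (hCS hc)
    exact ⟨a, ⟨ha, hc⟩, (hS.enumOrd_lt_enumOrd hκ hb ha).1 hbc⟩
  · -- `e b` is the supremum of the `e a` with `a < b` in the preimage, which lies in `C`
    set P := {a | (a < κ.ord ∧ e a ∈ C) ∧ a < b}
    have hP : Nonempty P := by
      obtain ⟨a, ha, -, hab⟩ := hdense 0 (pos_iff_ne_zero.2 hb0)
      exact ⟨⟨a, ha, hab⟩⟩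
    have hebd : BddAbove (range fun a : P => e a) :=
      ⟨e b, by rintro _ ⟨a, rfl⟩; exact ((hS.enumOrd_lt_enumOrd hκ a.2.1.1 hb).2 a.2.2).le⟩
    have hnext : ∀ a : P, ∃ a' : P, a.1 < a'.1 := fun a =>
      let ⟨a', ha', haa', ha'b⟩ := hdense a a.2.2
      ⟨⟨a', ha', ha'b⟩, haa'⟩
    have hlt_sup : ∀ a : P, e a < ⨆ a' : P, e a' := fun a =>
      let ⟨a', haa'⟩ := hnext a
      ((hS.enumOrd_lt_enumOrd hκ a.2.1.1 a'.2.1.1).2 haa').trans_le (le_ciSup hebd a')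
    have hsup_le : ⨆ a : P, e a ≤ e b :=
      ciSup_le fun a => ((hS.enumOrd_lt_enumOrd hκ a.2.1.1 hb).2 a.2.2).le
    have hsupC : ⨆ a : P, e a ∈ C :=
      hC.iSup_mem (hsup_le.trans_lt (hS.enumOrd_lt_ord hκ hb)) fun a =>
        let ⟨a', haa'⟩ := hnext a
        ⟨e a', a'.2.1.2, (hS.enumOrd_lt_enumOrd hκ a.2.1.1 a'.2.1.1).2 haa', hlt_sup a'⟩
    have hb_le : e b ≤ ⨆ a : P, e a := by
      refine Ordinal.enumOrd_le_of_forall_lt (hCS hsupC) fun c hc => ?_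
      obtain ⟨a, ha, hca, hab⟩ := hdense c hc
      exact ((hS.enumOrd_lt_enumOrd hκ (hca.trans ha.1) ha.1).2 hca).trans (hlt_sup ⟨a, ha, hab⟩)
    exact hb_le.antisymm hsup_le ▸ hsupC

theorem IsClubIn.image_enumOrd (hD : IsClubIn D κ.ord) (hS : IsUnboundedIn S κ.ord)
    (hκ : κ.IsRegular) (hC : IsClubIn C κ.ord) (hCS : C ⊆ S)
    (hDC : ∀ a ∈ D, Ordinal.enumOrd S a ∈ C) : IsClubIn (Ordinal.enumOrd S '' D) κ.ord := by
  set e := Ordinal.enumOrd S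
  refine ⟨?_, fun b hb => ?_, fun b hb hb0 hdense => ?_⟩
  · rintro _ ⟨a, ha, rfl⟩
    exact hS.enumOrd_lt_ord hκ (hD.1 ha)
  · obtain ⟨a, ha, hba⟩ := hD.2.1 b hb
    exact ⟨e a, ⟨a, ha, rfl⟩, hba.trans_le (hS.le_enumOrd hκ (hD.1 ha))⟩
  · have hbC : b ∈ C := hC.2.2 b hb hb0 fun d hd => by
      obtain ⟨_, ⟨a, ha, rfl⟩, hda, hab⟩ := hdense d hd
      exact ⟨e a, hDC a ha, hda, hab⟩
    obtain ⟨β, hβ, rfl⟩ := hS.exists_enumOrd_eq hκ (hCS hbC)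
    have hdense' : ∀ d < β, ∃ a ∈ D, d < a ∧ a < β := fun d hd => by
      obtain ⟨_, ⟨a, ha, rfl⟩, hda, hab⟩ :=
        hdense (e d) ((hS.enumOrd_lt_enumOrd hκ (hd.trans hβ) hβ).2 hd)
      have ha' := hD.1 ha
      exact ⟨a, ha, (hS.enumOrd_lt_enumOrd hκ (hd.trans hβ) ha').1 hda,
        (hS.enumOrd_lt_enumOrd hκ ha' hβ).1 hab⟩
    have hβ0 : β ≠ 0 := by
      obtain ⟨_, ⟨a, ha, rfl⟩, -, hab⟩ := hdense 0 (pos_iff_ne_zero.2 hb0)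
      exact (zero_le.trans_lt ((hS.enumOrd_lt_enumOrd hκ (hD.1 ha) hβ).1 hab)).ne'
    exact ⟨β, hD.2.2 β hβ hβ0 hdense', rfl⟩

end ClubEnumOrd

namespace SmallInNS

variable {κ : Cardinal} {S G A A' : Set Ordinal}

theorem exists_club_subset_of_compl (h : ℵ₀ < κ) (hS : SmallInNS κ {y | y < κ.ord ∧ y ∉ S}) :
    ∃ C, IsClubIn C κ.ord ∧ C ⊆ S := by
  obtain ⟨C, hC, hdisj⟩ := (iff_exists_club h).1 hS
  exact ⟨C, hC, fun x hx => by_contra fun hxS => hdisj.notMem_of_mem_right hx ⟨hC.1 hx, hxS⟩⟩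

theorem isUnboundedIn_of_compl (hκ : κ.IsRegular) (hS : S ⊆ Iio κ.ord)
    (hSc : SmallInNS κ {y | y < κ.ord ∧ y ∉ S}) : IsUnboundedIn S κ.ord := by
  refine ⟨hS, ?_⟩
  rcases lt_or_ge ℵ₀ κ with h | h
  · obtain ⟨C, hC, hCS⟩ := exists_club_subset_of_compl h hSc
    exact fun b hb => (hC.2.1 b hb).imp fun c ⟨hc, hbc⟩ => ⟨hCS hc, hbc⟩
  · obtain ⟨b₀, hb₀, hbd⟩ := (iff_bddAbove h).1 hSc
    intro b hb
    have hlt : Order.succ (max b₀ b) < κ.ord :=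
      (isSuccLimit_ord hκ.aleph0_le).succ_lt (max_lt hb₀ hb)
    refine ⟨_, by_contra fun hn => (hbd _ ⟨hlt, hn⟩).not_ge ?_, ?_⟩
    · exact (le_max_left b₀ b).trans (Order.le_succ _)
    · exact (le_max_right b₀ b).trans_lt (Order.lt_succ _)

theorem inter_iff_preimage_enumOrd (hκ : κ.IsRegular) (hS : S ⊆ Iio κ.ord)
    (hSc : SmallInNS κ {y | y < κ.ord ∧ y ∉ S}) (Y : Set Ordinal) :
    SmallInNS κ (Y ∩ S) ↔ SmallInNS κ {a | a < κ.ord ∧ Ordinal.enumOrd S a ∈ Y} := by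
  have hSu := isUnboundedIn_of_compl hκ hS hSc
  rcases lt_or_ge ℵ₀ κ with h | h
  · obtain ⟨C₀, hC₀, hC₀S⟩ := exists_club_subset_of_compl h hSc
    rw [iff_exists_club h, iff_exists_club h]
    constructor
    · rintro ⟨C, hC, hdisj⟩
      refine ⟨_, (hC.inter hκ h hC₀).preimage_enumOrd hSu hκ fun x hx => hC₀S hx.2, ?_⟩
      exact disjoint_left.2 fun a ⟨_, haY⟩ ⟨_, haC, haC₀⟩ =>
        hdisj.notMem_of_mem_right haC ⟨haY, hC₀S haC₀⟩
    · rintro ⟨D, hD, hdisj⟩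
      refine ⟨_, (hD.inter hκ h (hC₀.preimage_enumOrd hSu hκ hC₀S)).image_enumOrd hSu hκ hC₀
        hC₀S fun a ha => ha.2.2, ?_⟩
      exact disjoint_left.2 fun _ ⟨hxY, _⟩ ⟨a, ⟨haD, ha, _⟩, hax⟩ =>
        hdisj.notMem_of_mem_right haD ⟨ha, hax ▸ hxY⟩
  · rw [iff_bddAbove h, iff_bddAbove h]
    constructor
    · rintro ⟨b, hb, hbd⟩
      exact ⟨b, hb, fun a ⟨ha, haY⟩ =>
        (hSu.le_enumOrd hκ ha).trans_lt (hbd _ ⟨haY, hSu.enumOrd_mem hκ ha⟩)⟩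
    · rintro ⟨b, hb, hbd⟩
      refine ⟨_, hSu.enumOrd_lt_ord hκ hb, fun x ⟨hxY, hxS⟩ => ?_⟩
      obtain ⟨a, ha, rfl⟩ := hSu.exists_enumOrd_eq hκ hxS
      exact (hSu.enumOrd_lt_enumOrd hκ ha hb).2 (hbd a ⟨ha, hxY⟩)

theorem iff_of_enumOrd (hκ : κ.IsRegular) (hS : S ⊆ Iio κ.ord) (hGS : G ⊆ S)
    (hG : SmallInNS κ {y | y < κ.ord ∧ y ∉ G}) (hA : A ⊆ Iio κ.ord) (hA' : A' ⊆ Iio κ.ord)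
    (h : ∀ a < κ.ord, Ordinal.enumOrd S a ∈ G → (a ∈ A' ↔ Ordinal.enumOrd S a ∈ A)) :
    SmallInNS κ A ↔ SmallInNS κ A' := by
  have hSc : SmallInNS κ {y | y < κ.ord ∧ y ∉ S} :=
    hG.mono fun y ⟨hy, hyS⟩ => ⟨hy, fun hyG => hyS (hGS hyG)⟩
  have hN : SmallInNS κ {a | a < κ.ord ∧ Ordinal.enumOrd S a ∈ {y | y < κ.ord ∧ y ∉ G}} :=
    (inter_iff_preimage_enumOrd hκ hS hSc _).1 (hG.mono inter_subset_left)
  calc SmallInNS κ A ↔ SmallInNS κ ((A ∩ G) ∩ S) := by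
        rw [inter_assoc, inter_eq_left.2 hGS]
        exact iff_of_subset_union hκ hG
          (fun y hy => (em (y ∈ G)).imp (fun hyG => ⟨hy, hyG⟩) fun hyG => ⟨hA hy, hyG⟩)
          fun y hy => Or.inl hy.1
    _ ↔ SmallInNS κ {a | a < κ.ord ∧ Ordinal.enumOrd S a ∈ A ∩ G} :=
        inter_iff_preimage_enumOrd hκ hS hSc _
    _ ↔ SmallInNS κ A' := by
        refine iff_of_subset_union hκ hN (fun a ⟨ha, heA, heG⟩ => Or.inl ((h a ha heG).2 heA))
          fun a ha' => ?_
        have ha := hA' ha'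
        by_cases heG : Ordinal.enumOrd S a ∈ G
        · exact Or.inl ⟨ha, (h a ha heG).1 ha', heG⟩
        · exact Or.inr ⟨ha, (isUnboundedIn_of_compl hκ hS hSc).enumOrd_lt_ord hκ ha, heG⟩

end SmallInNS

section InProdNS

variable {k : ℕ}

theorem inProdNS_succ_iff (κs : Fin (k + 1) → Cardinal) (P : (Fin (k + 1) → Ordinal) → Prop) :
    InProdNS κs {τ | (∀ i, τ i < (κs i).ord) ∧ P τ} ↔
      SmallInNS (κs 0) {a | a < (κs 0).ord ∧ ¬ InProdNS (fun i => κs i.succ)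
        {t | (∀ i, t i < (κs i.succ).ord) ∧ P (Fin.cons a t)}} := by
  rw [InProdNS]
  refine iff_of_eq (congrArg _ (ext fun a => and_congr_right fun ha => ?_))
  simp only [mem_ofPred_eq, Fin.forall_fin_succ, Fin.cons_zero, Fin.cons_succ, ha, true_and]

theorem not_inProdNS_of_forall : ∀ {k : ℕ} (κs : Fin k → Cardinal), (∀ i, (κs i).IsRegular) →
    ∀ (P : (Fin k → Ordinal) → Prop), (∀ τ, (∀ i, τ i < (κs i).ord) → P τ) →
      ¬ InProdNS κs {τ | (∀ i, τ i < (κs i).ord) ∧ P τ}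
  | 0, κs, _, P, hP => by
    rw [InProdNS]
    exact nonempty_iff_ne_empty.1 ⟨Fin.elim0, fun i => i.elim0, hP _ fun i => i.elim0⟩
  | k + 1, κs, hκs, P, hP => by
    rw [inProdNS_succ_iff]
    refine fun hs => SmallInNS.not_Iio (hκs 0) (hs.mono fun a ha => ⟨ha, ?_⟩)
    refine not_inProdNS_of_forall _ (fun i => hκs i.succ) _ fun t ht => hP _ ?_
    simpa [Fin.forall_fin_succ] using ⟨ha, ht⟩

end InProdNS

def IsCanonicalEnum {k : ℕ} (κs : Fin k → Cardinal) (X : Set (Fin k → Ordinal))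
    (π : (Fin k → Ordinal) → Fin k → Ordinal) : Prop :=
  ∀ σ : Fin k → Ordinal, (∀ i, σ i < (κs i).ord) → ∀ i : Fin k,
    π σ i = Ordinal.enumOrd {b | ∃ τ ∈ X, (∀ j < i, τ j = π σ j) ∧ τ i = b} (σ i)

namespace IsCanonicalEnum

variable {k : ℕ} {κs : Fin (k + 1) → Cardinal} {X : Set (Fin (k + 1) → Ordinal)}
  {π : (Fin (k + 1) → Ordinal) → Fin (k + 1) → Ordinal} {a : Ordinal} {t : Fin k → Ordinal}

theorem apply_zero (hπ : IsCanonicalEnum κs X π) {σ : Fin (k + 1) → Ordinal}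
    (hσ : ∀ i, σ i < (κs i).ord) : π σ 0 = Ordinal.enumOrd ((· 0) '' X) (σ 0) := by
  rw [hπ σ hσ 0]
  congr 1
  ext
  simp

theorem apply_cons_zero (hπ : IsCanonicalEnum κs X π) (ha : a < (κs 0).ord)
    (ht : ∀ i, t i < (κs i.succ).ord) :
    π (Fin.cons a t) 0 = Ordinal.enumOrd ((· 0) '' X) a :=
  hπ.apply_zero (σ := Fin.cons a t) (Fin.cases ha ht)

theorem apply_cons (hπ : IsCanonicalEnum κs X π) (ha : a < (κs 0).ord)
    (ht : ∀ i, t i < (κs i.succ).ord) :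
    π (Fin.cons a t) = Fin.cons (Ordinal.enumOrd ((· 0) '' X) a) (Fin.tail (π (Fin.cons a t))) := by
  rw [← hπ.apply_cons_zero ha ht, Fin.cons_self_tail]

theorem tail (hπ : IsCanonicalEnum κs X π) (ha : a < (κs 0).ord) :
    IsCanonicalEnum (fun i => κs i.succ) {t | Fin.cons (Ordinal.enumOrd ((· 0) '' X) a) t ∈ X}
      (fun t => Fin.tail (π (Fin.cons a t))) := by
  intro t ht i
  have h0 := hπ.apply_cons_zero ha ht
  simp only [Fin.tail]
  rw [hπ _ (Fin.cases ha ht) i.succ, Fin.cons_succ]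
  congr 1
  ext b
  simp [Fin.exists_fin_succ_pi, Fin.forall_fin_succ, Fin.succ_lt_succ_iff, h0]

end IsCanonicalEnum

def TransfersNS {k : ℕ} (κs : Fin k → Cardinal) (X : Set (Fin k → Ordinal))
    (π : (Fin k → Ordinal) → Fin k → Ordinal) : Prop :=
  ∀ B : Set (Fin k → Ordinal), InProdNS κs {τ | (∀ i, τ i < (κs i).ord) ∧ τ ∉ B} ↔
    InProdNS κs {σ | (∀ i, σ i < (κs i).ord) ∧ π σ ∈ X ∧ π σ ∉ B}

theorem transfersNS_zero {κs : Fin 0 → Cardinal} {X : Set (Fin 0 → Ordinal)}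
    (hXc : InProdNS κs {τ | (∀ i, τ i < (κs i).ord) ∧ τ ∉ X})
    (π : (Fin 0 → Ordinal) → Fin 0 → Ordinal) : TransfersNS κs X π := by
  rw [InProdNS, eq_empty_iff_forall_notMem] at hXc
  have hX : ∀ τ, τ ∈ X := fun τ => by_contra fun hτ => hXc τ ⟨fun i => i.elim0, hτ⟩
  have hπ : ∀ σ, π σ = σ := fun σ => Subsingleton.elim _ _
  intro B
  simp [InProdNS, hX, hπ]

theorem IsCanonicalEnum.transfersNS_succ {k : ℕ} {κs : Fin (k + 1) → Cardinal}
    {X : Set (Fin (k + 1) → Ordinal)} {π : (Fin (k + 1) → Ordinal) → Fin (k + 1) → Ordinal}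
    (hπ : IsCanonicalEnum κs X π) (hκs : ∀ i, (κs i).IsRegular)
    (hX : ∀ τ ∈ X, ∀ i, τ i < (κs i).ord)
    (hXc : InProdNS κs {τ | (∀ i, τ i < (κs i).ord) ∧ τ ∉ X})
    (IH : ∀ (X' : Set (Fin k → Ordinal)) (π' : (Fin k → Ordinal) → Fin k → Ordinal),
      (∀ τ ∈ X', ∀ i, τ i < (κs i.succ).ord) →
      InProdNS (fun i => κs i.succ) {τ | (∀ i, τ i < (κs i.succ).ord) ∧ τ ∉ X'} →
      IsCanonicalEnum (fun i => κs i.succ) X' π' → TransfersNS (fun i => κs i.succ) X' π') :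
    TransfersNS κs X π := by
  intro B
  set e := Ordinal.enumOrd ((· 0) '' X)
  set G := {y | y < (κs 0).ord ∧
    InProdNS (fun i => κs i.succ) {t | (∀ i, t i < (κs i.succ).ord) ∧ Fin.cons y t ∉ X}}
  have hS₀ : (· 0) '' X ⊆ Iio (κs 0).ord := by
    rintro _ ⟨τ, hτ, rfl⟩
    exact hX τ hτ 0
  have hG : SmallInNS (κs 0) {y | y < (κs 0).ord ∧ y ∉ G} :=
    ((inProdNS_succ_iff κs _).1 hXc).mono fun y ⟨hy, hyG⟩ => ⟨hy, fun h => hyG ⟨hy, h⟩⟩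
  have hGS₀ : G ⊆ (· 0) '' X := fun y ⟨_, hy⟩ => by_contra fun hyS =>
    not_inProdNS_of_forall _ (fun i => hκs i.succ) (fun t => Fin.cons y t ∉ X)
      (fun t _ ht => hyS ⟨_, ht, Fin.cons_zero _ _⟩) hy
  rw [inProdNS_succ_iff, inProdNS_succ_iff]
  refine SmallInNS.iff_of_enumOrd (hκs 0) hS₀ hGS₀ hG (fun _ h => h.1) (fun _ h => h.1)
    fun a ha heG => and_congr (iff_of_true ha heG.1) (not_congr ?_)
  have hsection : ∀ t, (∀ i, t i < (κs i.succ).ord) →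
      (π (Fin.cons a t) ∈ X ∧ π (Fin.cons a t) ∉ B ↔
        Fin.cons (e a) (Fin.tail (π (Fin.cons a t))) ∈ X ∧
          Fin.cons (e a) (Fin.tail (π (Fin.cons a t))) ∉ B) := fun t ht => by
    rw [← hπ.apply_cons ha ht]
  refine Iff.trans ?_ (IH _ _ (fun τ hτ i => hX _ hτ i.succ) heG.2 (hπ.tail ha)
    {t | Fin.cons (e a) t ∈ B}).symm
  exact iff_of_eq (congrArg _ (ext fun t => and_congr_right (hsection t)))

theorem stmt17_general (k : ℕ) (κs : Fin k → Cardinal)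
    (hreg : ∀ i, (κs i).IsRegular)
    (X : Set (Fin k → Ordinal))
    (hX : ∀ τ ∈ X, ∀ i, τ i < (κs i).ord)
    (hcompl : InProdNS κs {τ | (∀ i, τ i < (κs i).ord) ∧ τ ∉ X})
    (π : (Fin k → Ordinal) → (Fin k → Ordinal))
    (hπ : ∀ σ : Fin k → Ordinal, (∀ i, σ i < (κs i).ord) → ∀ i : Fin k,
      π σ i = Ordinal.enumOrd
        {b : Ordinal | ∃ τ' ∈ X, (∀ j < i, τ' j = π σ j) ∧ τ' i = b} (σ i)) :
    ∀ B : Set (Fin k → Ordinal),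
      (InProdNS κs {τ | (∀ i, τ i < (κs i).ord) ∧ τ ∉ B} ↔
        InProdNS κs {σ | (∀ i, σ i < (κs i).ord) ∧ π σ ∈ X ∧ π σ ∉ B}) := by
  induction k with
  | zero => exact transfersNS_zero hcompl π
  | succ k IH =>
    exact IsCanonicalEnum.transfersNS_succ hπ hreg hX hcompl
      fun X' π' hX' hXc' hπ' => IH _ (fun i => hreg i.succ) X' hX' hXc' π' hπ'

/-- The transfer property of the canonical enumeration map `π` onto a set `X` whose
complement is in `NS(κ̄)`: a set `B` has `NS(κ̄)`-large intersection with the product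
iff `π⁻¹[X \ B]` is `NS(κ̄)`-small, i.e. `∏κ̄ \ B ∈ NS(κ̄) ↔ π⁻¹[X \ B] ∈ NS(κ̄)`. -/
theorem stmt17 (k : ℕ) (κs : Fin k → Cardinal)
    (hreg : ∀ i, (κs i).IsRegular)
    (hdec : ∀ i j : Fin k, i < j → κs j < κs i)
    (X : Set (Fin k → Ordinal))
    (hX : ∀ τ ∈ X, ∀ i, τ i < (κs i).ord)
    (hcompl : InProdNS κs {τ | (∀ i, τ i < (κs i).ord) ∧ τ ∉ X})
    (π : (Fin k → Ordinal) → (Fin k → Ordinal))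
    (hπX : ∀ σ : Fin k → Ordinal, (∀ i, σ i < (κs i).ord) → π σ ∈ X)
    (hπ : ∀ σ : Fin k → Ordinal, (∀ i, σ i < (κs i).ord) → ∀ i : Fin k,
      π σ i = Ordinal.enumOrd
        {b : Ordinal | ∃ τ' ∈ X, (∀ j < i, τ' j = π σ j) ∧ τ' i = b} (σ i))
    (honto : ∀ τ ∈ X, ∃ σ : Fin k → Ordinal, (∀ i, σ i < (κs i).ord) ∧ π σ = τ) :
    ∀ B : Set (Fin k → Ordinal),
      (InProdNS κs {τ | (∀ i, τ i < (κs i).ord) ∧ τ ∉ B} ↔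
        InProdNS κs {σ | (∀ i, σ i < (κs i).ord) ∧ π σ ∈ X ∧ π σ ∉ B}) :=
  stmt17_general k κs hreg X hX hcompl π hπ
end
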